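/- arXiv:2202.07517 — 3 statements merged into one kernel-verified Lean document; each statement's English description precedes it below -/
import Mathlib

section
/- Fix reals l < m < u, an integer n ≥ 2, and a value v with l < v. Define λH(b) = ((u−m)/(u−l))^{(n−1)/n}·(b−l) and λL(b) = max{((u−m)/(u−b))^{(n−1)/n}·(v−b), v−m} for b < m and λL(b) = (v−b)·(1 − ((b−m)/(b−l))^{(n−1)/n}) for m ≤ b ≤ v. Then λH is continuous and strictly increasing on [l, v] with λH(l) = 0, λL is continuous, weakly decreasing, and satisfies λL(l) > 0 and λL(v) ≤ λH(v), and consequently there exists a unique b* ∈ (l, v] with λH(b*) = λL(b*). -/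
open Set

private lemma key_aux (l m u v e : ℝ) (he0 : 0 < e) (he1 : e < 1)
    (hlm : l < m) (hmu : m < u) (hlv : l < v) (hmv : m ≤ v) (hvu : v ≤ u) :
    ContinuousOn (fun b => ((u - m) / (u - l)) ^ e * (b - l)) (Set.Icc l v) ∧
    StrictMonoOn (fun b => ((u - m) / (u - l)) ^ e * (b - l)) (Set.Icc l v) ∧
    ((u - m) / (u - l)) ^ e * (l - l) = 0 ∧
    ContinuousOn (fun b => if b < m then
        max (((u - m) / (u - b)) ^ e * (v - b)) (v - m)
      else (v - b) * (1 - ((b - m) / (b - l)) ^ e)) (Set.Icc l v) ∧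
    AntitoneOn (fun b => if b < m then
        max (((u - m) / (u - b)) ^ e * (v - b)) (v - m)
      else (v - b) * (1 - ((b - m) / (b - l)) ^ e)) (Set.Icc l v) ∧
    0 < (if l < m then
        max (((u - m) / (u - l)) ^ e * (v - l)) (v - m)
      else (v - l) * (1 - ((l - m) / (l - l)) ^ e)) ∧
    (if v < m then
        max (((u - m) / (u - v)) ^ e * (v - v)) (v - m)
      else (v - v) * (1 - ((v - m) / (v - l)) ^ e)) ≤ ((u - m) / (u - l)) ^ e * (v - l) ∧
    ∃! b, b ∈ Set.Ioc l v ∧ ((u - m) / (u - l)) ^ e * (b - l) =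
      (if b < m then
        max (((u - m) / (u - b)) ^ e * (v - b)) (v - m)
      else (v - b) * (1 - ((b - m) / (b - l)) ^ e)) := by
  set c := ((u - m) / (u - l)) ^ e with hc
  have hcpos : 0 < c := Real.rpow_pos_of_pos (div_pos (by linarith) (by linarith)) _
  set lH : ℝ → ℝ := fun b => c * (b - l) with hlH
  set A : ℝ → ℝ := fun b => max (((u - m) / (u - b)) ^ e * (v - b)) (v - m) with hA
  set B : ℝ → ℝ := fun b => (v - b) * (1 - ((b - m) / (b - l)) ^ e) with hB
  set lL : ℝ → ℝ := fun b => if b < m then A b else B b with hlL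
  -- values at key points
  have hABm : A m = B m := by
    simp [hA, hB, div_self (sub_ne_zero.mpr (ne_of_gt hmu)), Real.one_rpow,
      Real.zero_rpow he0.ne']
  have hLm : lL m = v - m := by
    simp [hlL, hB, Real.zero_rpow he0.ne']
  have hLv : lL v = 0 := by
    simp [hlL, hB, not_lt.mpr hmv]
  -- continuity of lH
  have ContH : ContinuousOn lH (Set.Icc l v) :=
    (continuous_const.mul (continuous_id.sub continuous_const)).continuousOn
  -- strict monotonicity of lH
  have SMH : StrictMonoOn lH (Set.Icc l v) := by
    intro x _ y _ hxy
    simp only [hlH]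
    have : x - l < y - l := by linarith
    exact mul_lt_mul_of_pos_left this hcpos
  -- continuity of A on points ≤ m
  have ContA : ContinuousOn A (Set.Icc l v ∩ Set.Iic m) := by
    refine ContinuousOn.sup ?_ continuousOn_const
    apply ContinuousOn.mul
    · apply ContinuousOn.rpow_const
      · apply continuousOn_const.div (continuous_const.sub continuous_id).continuousOn
        intro x hx
        have : x ≤ m := hx.2
        have : (0:ℝ) < u - x := by linarith
        exact ne_of_gt this
      · intro x _; exact Or.inr he0.le
    · exact (continuous_const.sub continuous_id).continuousOn
  have ContB : ContinuousOn B (Set.Icc l v ∩ Set.Ici m) := by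
    apply ContinuousOn.mul ((continuous_const.sub continuous_id).continuousOn)
    apply continuousOn_const.sub
    apply ContinuousOn.rpow_const
    · apply ContinuousOn.div ((continuous_id.sub continuous_const).continuousOn)
        ((continuous_id.sub continuous_const).continuousOn)
      intro x hx
      have : m ≤ x := hx.2
      have : (0:ℝ) < x - l := by linarith
      exact ne_of_gt this
    · intro x _; exact Or.inr he0.le
  -- continuity of lL
  have ContL : ContinuousOn lL (Set.Icc l v) := by
    apply ContinuousOn.if
    · intro a ha
      have h2 := ha.2
      rw [show {a : ℝ | a < m} = Set.Iio m from rfl, frontier_Iio] at h2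
      have ham : a = m := h2
      rw [ham]; exact hABm
    · refine ContA.mono ?_
      rw [show {a : ℝ | a < m} = Set.Iio m from rfl, closure_Iio]
    · refine ContB.mono ?_
      have : {a : ℝ | ¬ a < m} = Set.Ici m := by ext a; simp [not_lt]
      rw [this, closure_Ici]
  -- A antitone on [l, m]
  have hAant : AntitoneOn A (Set.Icc l m) := by
    have key : ∀ t ∈ Set.Icc l m, ((u - m) / (u - t)) ^ e * (v - t)
        = (u - m) ^ e * ((u - t) ^ (1 - e) * ((v - t) / (u - t))) := by
      intro t ht
      have hut : (0:ℝ) < u - t := by have := ht.2; linarith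
      have hue : (0:ℝ) < (u - t) ^ e := Real.rpow_pos_of_pos hut _
      rw [Real.div_rpow (by linarith) hut.le, Real.rpow_sub hut, Real.rpow_one]
      field_simp
    intro x hx y hy hxy
    simp only [hA]
    apply max_le_max _ le_rfl
    rw [key x hx, key y hy]
    have huy : (0:ℝ) < u - y := by have := hy.2; linarith
    have hux : (0:ℝ) < u - x := by have := hx.2; linarith
    have h1 : (u - y) ^ (1 - e) ≤ (u - x) ^ (1 - e) :=
      Real.rpow_le_rpow huy.le (by linarith) (by linarith)
    have h2 : (v - y) / (u - y) ≤ (v - x) / (u - x) := by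
      rw [div_le_div_iff₀ huy hux]
      nlinarith [mul_nonneg (sub_nonneg.mpr hxy) (sub_nonneg.mpr hvu)]
    have h3 : 0 ≤ (v - y) / (u - y) := by
      apply div_nonneg _ huy.le
      have := hy.2; linarith
    have h4 : 0 ≤ (u - x) ^ (1 - e) := (Real.rpow_pos_of_pos hux _).le
    have h5 : 0 ≤ (u - m) ^ e := (Real.rpow_pos_of_pos (by linarith) _).le
    exact mul_le_mul_of_nonneg_left (mul_le_mul h1 h2 h3 h4) h5
  -- B antitone on [m, v]
  have hBant : AntitoneOn B (Set.Icc m v) := by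
    intro x hx y hy hxy
    simp only [hB]
    have hxl : (0:ℝ) < x - l := by have := hx.1; linarith
    have hyl : (0:ℝ) < y - l := by have := hy.1; linarith
    have hr1 : (x - m) / (x - l) ≤ (y - m) / (y - l) := by
      rw [div_le_div_iff₀ hxl hyl]
      nlinarith [mul_nonneg (sub_nonneg.mpr hxy) (sub_nonneg.mpr hlm.le)]
    have hr0 : 0 ≤ (x - m) / (x - l) := div_nonneg (by have := hx.1; linarith) hxl.le
    have hr2 : (y - m) / (y - l) ≤ 1 := by
      rw [div_le_one hyl]; linarith
    have hpow : ((x - m) / (x - l)) ^ e ≤ ((y - m) / (y - l)) ^ e :=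
      Real.rpow_le_rpow hr0 hr1 he0.le
    have hle1 : ((y - m) / (y - l)) ^ e ≤ 1 :=
      Real.rpow_le_one (le_trans hr0 hr1) hr2 he0.le
    apply mul_le_mul (by linarith [hxy] : v - y ≤ v - x)
      (by linarith : 1 - ((y - m) / (y - l)) ^ e ≤ 1 - ((x - m) / (x - l)) ^ e)
      (by linarith) (by have := hx.2; linarith)
  -- lL agrees with A on [l, m]
  have hLA : ∀ x ∈ Set.Icc l m, lL x = A x := by
    intro x hx
    rcases lt_or_eq_of_le hx.2 with h | h
    · simp [hlL, h]
    · rw [h, hLm, hA]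
      simp [div_self (sub_ne_zero.mpr (ne_of_gt hmu)), Real.one_rpow]
  -- lL agrees with B on [m, v]
  have hLB : ∀ x ∈ Set.Icc m v, lL x = B x := by
    intro x hx
    simp [hlL, not_lt.mpr hx.1]
  -- antitone of lL
  have AntL : AntitoneOn lL (Set.Icc l v) := by
    intro x hx y hy hxy
    rcases le_total y m with h | h
    · rw [hLA x ⟨hx.1, le_trans hxy h⟩, hLA y ⟨hy.1, h⟩]
      exact hAant ⟨hx.1, le_trans hxy h⟩ ⟨hy.1, h⟩ hxy
    · rcases le_total m x with h' | h'
      · rw [hLB x ⟨h', hx.2⟩, hLB y ⟨h, hy.2⟩]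
        exact hBant ⟨h', hx.2⟩ ⟨h, hy.2⟩ hxy
      · calc lL y ≤ lL m := by
              rw [hLB y ⟨h, hy.2⟩, hLB m ⟨le_refl m, by linarith⟩]
              exact hBant ⟨le_refl m, by linarith⟩ ⟨h, hy.2⟩ h
          _ ≤ lL x := by
              rw [hLA x ⟨hx.1, h'⟩, hLA m ⟨hlm.le, le_refl m⟩]
              exact hAant ⟨hx.1, h'⟩ ⟨hlm.le, le_refl m⟩ h'
  -- lL l > 0
  have hLl : 0 < lL l := by
    have : lL l = A l := by simp [hlL, hlm]
    rw [this, hA]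
    have hpos : 0 < ((u - m) / (u - l)) ^ e * (v - l) :=
      mul_pos (Real.rpow_pos_of_pos (div_pos (by linarith) (by linarith)) _) (by linarith)
    exact lt_of_lt_of_le hpos (le_max_left _ _)
  -- lL v ≤ lH v
  have hHv : 0 < lH v := mul_pos hcpos (by linarith)
  have hLvH : lL v ≤ lH v := by rw [hLv]; exact hHv.le
  -- existence and uniqueness
  set F : ℝ → ℝ := fun b => lH b - lL b with hF
  have ContF : ContinuousOn F (Set.Icc l v) := ContH.sub ContL
  have SMF : StrictMonoOn F (Set.Icc l v) := by
    intro x hx y hy hxy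
    have h1 := SMH hx hy hxy
    have h2 := AntL hx hy hxy.le
    simp only [hF]; linarith
  have hFl : F l < 0 := by
    simp only [hF, hlH]
    have : c * (l - l) = 0 := by ring
    linarith
  have hFv : 0 ≤ F v := by simp only [hF]; linarith
  obtain ⟨b, hb, hFb⟩ := intermediate_value_Icc hlv.le ContF
    (Set.mem_Icc.mpr ⟨hFl.le, hFv⟩)
  have hbl : b ≠ l := by
    intro h; rw [h] at hFb; rw [hFb] at hFl; exact lt_irrefl 0 hFl
  have hbIoc : b ∈ Set.Ioc l v := ⟨lt_of_le_of_ne hb.1 (Ne.symm hbl), hb.2⟩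
  have hbeq : lH b = lL b := by
    have h : lH b - lL b = 0 := hFb
    linarith
  refine ⟨ContH, SMH, by ring, ContL, AntL, hLl, hLvH, b, ⟨hbIoc, hbeq⟩, ?_⟩
  rintro b' ⟨hb', heq⟩
  have hb'Icc : b' ∈ Set.Icc l v := ⟨hb'.1.le, hb'.2⟩
  have heq' : lH b' = lL b' := heq
  have hFb' : F b' = 0 := by
    show lH b' - lL b' = 0
    rw [heq']; ring
  exact SMF.injOn hb'Icc hb (by rw [hFb', hFb])

/-- Worst-case loss of bidding too high (λH) and too low (λL), aggregate moment beliefs: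
λH is continuous and strictly increasing on [l,v] with λH l = 0; λL is continuous,
weakly decreasing, positive at l and at most λH at v; hence there is a unique
b* ∈ (l, v] equalizing the two. -/
theorem stmt_4 (l m u v : ℝ) (n : ℕ) (hn : 2 ≤ n)
    (hlm : l < m) (hmu : m < u) (hlv : l < v) (hmv : m ≤ v) (hvu : v ≤ u) :
    let lH : ℝ → ℝ := fun b => ((u - m) / (u - l)) ^ (((n : ℝ) - 1) / (n : ℝ)) * (b - l)
    let lL : ℝ → ℝ := fun b =>
      if b < m then
        max (((u - m) / (u - b)) ^ (((n : ℝ) - 1) / (n : ℝ)) * (v - b)) (v - m)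
      else (v - b) * (1 - ((b - m) / (b - l)) ^ (((n : ℝ) - 1) / (n : ℝ)))
    ContinuousOn lH (Set.Icc l v) ∧ StrictMonoOn lH (Set.Icc l v) ∧ lH l = 0 ∧
    ContinuousOn lL (Set.Icc l v) ∧ AntitoneOn lL (Set.Icc l v) ∧
    0 < lL l ∧ lL v ≤ lH v ∧
    ∃! b, b ∈ Set.Ioc l v ∧ lH b = lL b := by
  intro lH lL
  have hn2 : (2:ℝ) ≤ (n:ℝ) := by exact_mod_cast hn
  have he0 : 0 < ((n : ℝ) - 1) / (n : ℝ) := div_pos (by linarith) (by linarith)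
  have he1 : ((n : ℝ) - 1) / (n : ℝ) < 1 := by
    rw [div_lt_one (by linarith)]; linarith
  exact key_aux l m u v _ he0 he1 hlm hmu hlv hmv hvu
end

section
/- Let l < u and l < μ < u, and let v satisfy l ≤ v < (u(μ−l) + μ(u−μ))/(u−l). Then b = u − sqrt((u−l)(u−v)) is the unique solution in [l, v] of the equation ((u−μ)/(u−l))·(b−l) = ((u−μ)/(u−b))·(v−b), i.e., of (b−l)(u−b) = (v−b)(u−l). -/
/-- Closed form of the two-bidder minimax-loss bid for low values: b = u − √((u−l)(u−v)) is
the unique solution in [l, v] of ((u−μ)/(u−l))·(b−l) = ((u−μ)/(u−b))·(v−b). -/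
theorem stmt_5 (l u μ v : ℝ) (hlu : l < u) (hlμ : l < μ) (hμu : μ < u)
    (hv1 : l ≤ v) (hv2 : v < (u * (μ - l) + μ * (u - μ)) / (u - l)) :
    (u - Real.sqrt ((u - l) * (u - v))) ∈ Set.Icc l v ∧
    ((u - μ) / (u - l)) * ((u - Real.sqrt ((u - l) * (u - v))) - l) =
      ((u - μ) / (u - (u - Real.sqrt ((u - l) * (u - v))))) *
        (v - (u - Real.sqrt ((u - l) * (u - v)))) ∧
    ∀ b ∈ Set.Icc l v,
      ((u - μ) / (u - l)) * (b - l) = ((u - μ) / (u - b)) * (v - b) →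
        b = u - Real.sqrt ((u - l) * (u - v)) := by
  have hul : (0:ℝ) < u - l := by linarith
  have huv : v < u := by
    rw [lt_div_iff₀ hul] at hv2
    nlinarith [sq_nonneg (u - μ)]
  set s := Real.sqrt ((u - l) * (u - v)) with hs
  have hprod : (0:ℝ) < (u - l) * (u - v) := by nlinarith
  have hs2 : s ^ 2 = (u - l) * (u - v) := Real.sq_sqrt hprod.le
  have hspos : 0 < s := Real.sqrt_pos.mpr hprod
  have hsle : s ≤ u - l := by nlinarith
  have hsge : u - v ≤ s := by nlinarith
  refine ⟨⟨by linarith, by linarith⟩, ?_, ?_⟩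
  · have h1 : u - (u - s) = s := by ring
    rw [h1]
    field_simp
    nlinarith [hs2]
  · rintro b ⟨hb1, hb2⟩ heq
    have hub : 0 < u - b := by linarith
    have hμpos : 0 < u - μ := by linarith
    rw [div_mul_eq_mul_div, div_mul_eq_mul_div, div_eq_div_iff hul.ne' hub.ne'] at heq
    have key : (u - b) ^ 2 = (u - l) * (u - v) := by nlinarith [heq]
    have : s = u - b := by
      rw [hs, ← key, Real.sqrt_sq hub.le]
    linarith
end

section
/- Fix an integer n ≥ 3, reals l ≤ x1 ≤ μ < x2, and a bid b with x1 < b < x2. Define π(x1) = (x2−μ)/(x2−x1) and λ(x1) = π(x1)^{n−1}·(b−x1). Then the derivative of λ with respect to x1 vanishes exactly at x̂1 = ((n−1)b − x2)/(n−2), λ is increasing in x1 for x1 < x̂1 and decreasing for x1 > x̂1; in particular x̂1 < b. -/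
/-!
Writing π = c / (a - x) for the probability of the low bid x, with c = x₂ − μ and a = x₂,
the loss is λ(x) = π(x)^m (b − x) with m = n − 1. Since π'/π = 1 / (a − x), one gets
λ'(x) = π^m (m (b − x)/(a − x) − 1) = π^m (m − 1)/(a − x) · (x̂ − x), where
x̂ = (m b − a)/(m − 1). For c > 0 and x < a the prefactor is positive, so λ' has the sign
of x̂ − x, and x̂ < b because b < a.
-/

open Set

noncomputable section

def loss (m : ℕ) (a c b x : ℝ) : ℝ := (c / (a - x)) ^ m * (b - x)

def lossCrit (m : ℕ) (a b : ℝ) : ℝ := (m * b - a) / (m - 1)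

variable {m : ℕ} {a b c x : ℝ}

theorem hasDerivAt_loss (hx : x ≠ a) :
    HasDerivAt (loss m a c b) ((c / (a - x)) ^ m * (m * (b - x) / (a - x) - 1)) x := by
  have hax : a - x ≠ 0 := sub_ne_zero.2 hx.symm
  have hπ := (hasDerivAt_const x c).fun_div ((hasDerivAt_id' x).const_sub a) hax
  refine ((hπ.fun_pow m).fun_mul ((hasDerivAt_id' x).const_sub b)).congr_deriv ?_
  cases m with
  | zero => simp
  | succ k =>
    simp only [Nat.cast_add, Nat.cast_one, Nat.add_sub_cancel, pow_succ]
    field_simp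
    ring

theorem lossCrit_lt (hm : 1 < m) (hba : b < a) : lossCrit m a b < b := by
  have hm' : (1 : ℝ) < m := by exact_mod_cast hm
  rw [lossCrit, div_lt_iff₀ (by linarith)]
  linarith

theorem hasDerivAt_loss_eq_mul_sub (hm : m ≠ 1) (hx : x ≠ a) :
    HasDerivAt (loss m a c b)
      ((c / (a - x)) ^ m * ((m - 1) / (a - x)) * (lossCrit m a b - x)) x := by
  have hm' : (m : ℝ) - 1 ≠ 0 := sub_ne_zero.2 (by exact_mod_cast hm)
  convert hasDerivAt_loss (m := m) (c := c) (b := b) hx using 1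
  rw [lossCrit]
  field_simp [sub_ne_zero.2 hx.symm]
  ring

theorem loss_deriv_prefactor_pos (hc : 0 < c) (hm : 1 < m) (hx : x < a) :
    0 < (c / (a - x)) ^ m * ((m - 1) / (a - x)) := by
  have hm' : (1 : ℝ) < m := by exact_mod_cast hm
  have hax : 0 < a - x := sub_pos.2 hx
  have : 0 < (m : ℝ) - 1 := by linarith
  positivity

theorem deriv_loss_eq_zero_iff (hc : 0 < c) (hm : 1 < m) (hx : x < a) :
    deriv (loss m a c b) x = 0 ↔ x = lossCrit m a b := by
  rw [(hasDerivAt_loss_eq_mul_sub hm.ne' hx.ne).deriv, mul_eq_zero,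
    or_iff_right (loss_deriv_prefactor_pos hc hm hx).ne', sub_eq_zero, eq_comm]

theorem strictMonoOn_loss (hc : 0 < c) (hm : 1 < m) (hba : b < a) :
    StrictMonoOn (loss m a c b) (Iic (lossCrit m a b)) := by
  have hlt : ∀ x ∈ Iic (lossCrit m a b), x < a := fun x hx =>
    (mem_Iic.1 hx).trans_lt ((lossCrit_lt hm hba).trans hba)
  have hderiv := fun x hx => hasDerivAt_loss_eq_mul_sub (c := c) (b := b) hm.ne' (hlt x hx).ne
  refine strictMonoOn_of_deriv_pos (convex_Iic _)
    (fun x hx => (hderiv x hx).continuousAt.continuousWithinAt) fun x hx => ?_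
  rw [interior_Iic] at hx
  rw [(hderiv x (Iio_subset_Iic_self hx)).deriv]
  exact mul_pos (loss_deriv_prefactor_pos hc hm (hlt x (Iio_subset_Iic_self hx))) (sub_pos.2 hx)

theorem strictAntiOn_loss (hc : 0 < c) (hm : 1 < m) (hba : b < a) :
    StrictAntiOn (loss m a c b) (Icc (lossCrit m a b) b) := by
  have hlt : ∀ x ∈ Icc (lossCrit m a b) b, x < a := fun x hx => hx.2.trans_lt hba
  have hderiv := fun x hx => hasDerivAt_loss_eq_mul_sub (c := c) (b := b) hm.ne' (hlt x hx).ne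
  refine strictAntiOn_of_deriv_neg (convex_Icc _ _)
    (fun x hx => (hderiv x hx).continuousAt.continuousWithinAt) fun x hx => ?_
  rw [interior_Icc] at hx
  rw [(hderiv x (Ioo_subset_Icc_self hx)).deriv]
  exact mul_neg_of_pos_of_neg (loss_deriv_prefactor_pos hc hm (hlt x (Ioo_subset_Icc_self hx)))
    (sub_neg.2 hx.1)

end

theorem stmt_7_general (n : ℕ) (hn : 3 ≤ n) (μ x2 b : ℝ)
    (hμx2 : μ < x2) (hbx2 : b < x2) :
    let lam : ℝ → ℝ := fun x => ((x2 - μ) / (x2 - x)) ^ (n - 1) * (b - x)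
    let xhat : ℝ := (((n : ℝ) - 1) * b - x2) / ((n : ℝ) - 2)
    xhat < b ∧
    (∀ x < b, (deriv lam x = 0 ↔ x = xhat)) ∧
    StrictMonoOn lam (Set.Iic xhat) ∧
    StrictAntiOn lam (Set.Icc xhat b) := by
  intro lam xhat
  have hm : 1 < n - 1 := by omega
  have hc : 0 < x2 - μ := sub_pos.2 hμx2
  have hlam : lam = loss (n - 1) x2 (x2 - μ) b := rfl
  have hxhat : xhat = lossCrit (n - 1) x2 b := by
    show (((n : ℝ) - 1) * b - x2) / ((n : ℝ) - 2) = _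
    rw [lossCrit, Nat.cast_sub (by omega : 1 ≤ n)]
    push_cast
    ring
  rw [hlam, hxhat]
  exact ⟨lossCrit_lt hm hbx2, fun x hx => deriv_loss_eq_zero_iff hc hm (hx.trans hbx2),
    strictMonoOn_loss hc hm hbx2, strictAntiOn_loss hc hm hbx2⟩

/-- For n ≥ 3, the loss λ(x1) = ((x2−μ)/(x2−x1))^(n−1)·(b−x1) of bidding b against a two-point
distribution with mean μ has derivative vanishing exactly at x̂1 = ((n−1)b − x2)/(n−2); it is
strictly increasing below x̂1 and strictly decreasing above it (up to b), and x̂1 < b. -/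
theorem stmt_7 (n : ℕ) (hn : 3 ≤ n) (l μ x2 b : ℝ)
    (hlμ : l ≤ μ) (hμx2 : μ < x2) (hlb : l < b) (hbx2 : b < x2) :
    let lam : ℝ → ℝ := fun x => ((x2 - μ) / (x2 - x)) ^ (n - 1) * (b - x)
    let xhat : ℝ := (((n : ℝ) - 1) * b - x2) / ((n : ℝ) - 2)
    xhat < b ∧
    (∀ x < b, (deriv lam x = 0 ↔ x = xhat)) ∧
    StrictMonoOn lam (Set.Iic xhat) ∧
    StrictAntiOn lam (Set.Icc xhat b) :=
  stmt_7_general n hn μ x2 b hμx2 hbx2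
end
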